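/- arXiv:1809.10608 — 3 statements merged into one kernel-verified Lean document; each statement's English description precedes it below -/
import Mathlib

section
/- Let f ∈ ℝ[x₁,…,xₙ] be a polynomial with support A = supp(f) ⊆ ℕⁿ, written f = Σ_{a∈A} c_a x^a with all c_a ≠ 0. If f is nonnegative on ℝⁿ, then (1) every vertex of the convex hull of A lies in (2ℕ)ⁿ (i.e., has all coordinates even), and (2) for every vertex a of the convex hull of A, the corresponding coefficient c_a is positive. -/
/-!
Pick a linear functional `w` that is strictly maximised over the support of `f` at the vertex
`a`, and evaluate `f` along the curve `xᵢ = εᵢ exp (t wᵢ)` with signs `εᵢ = ±1`. As `t → ∞` the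
term `c_a ε^a exp (t ⟨a, w⟩)` dominates all others, so nonnegativity of `f` forces
`c_a ε^a ≥ 0` for every choice of signs. All signs `+1` give `c_a > 0`; flipping the sign of a
single coordinate `j` then shows that `a j` is even.
-/

open MvPolynomial Finset Classical

namespace SONC

noncomputable section

/-- Embedding of lattice exponent vectors into `ℝⁿ`. -/
def toR {n : ℕ} (a : Fin n →₀ ℕ) : Fin n → ℝ := fun i => (a i : ℝ)

/-- A lattice point is even if all its coordinates are even, i.e. it lies in `(2ℕ)ⁿ`. -/
def IsEvenPoint {n : ℕ} (a : Fin n →₀ ℕ) : Prop := ∀ i, Even (a i)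

theorem exists_forall_lt_of_mem_extremePoints_convexHull {E : Type*} [AddCommGroup E]
    [Module ℝ E] [TopologicalSpace E] [IsTopologicalAddGroup E] [ContinuousSMul ℝ E]
    [LocallyConvexSpace ℝ E] [T2Space E] {s : Set E} (hs : s.Finite) {x : E}
    (hx : x ∈ (convexHull ℝ s).extremePoints ℝ) :
    ∃ ℓ : StrongDual ℝ E, ∀ y ∈ s, y ≠ x → ℓ y < ℓ x := by
  have hx' : x ∉ convexHull ℝ (s \ {x}) := fun h =>
    ((convex_convexHull ℝ s).mem_extremePoints_iff_mem_sdiff_convexHull_sdiff.1 hx).2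
      (convexHull_mono (Set.sdiff_subset_sdiff_left (subset_convexHull ℝ s)) h)
  obtain ⟨ℓ, u, hlt, hu⟩ := geometric_hahn_banach_closed_point
    (convex_convexHull ℝ _) (hs.sdiff.isClosed_convexHull ℝ) hx'
  exact ⟨ℓ, fun y hy hyx => (hlt y (subset_convexHull ℝ _ ⟨hy, hyx⟩)).trans hu⟩

theorem exists_dotProduct_lt_of_mem_extremePoints_convexHull {ι : Type*} [Fintype ι]
    {s : Set (ι → ℝ)} (hs : s.Finite) {x : ι → ℝ} (hx : x ∈ (convexHull ℝ s).extremePoints ℝ) :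
    ∃ w : ι → ℝ, ∀ y ∈ s, y ≠ x → y ⬝ᵥ w < x ⬝ᵥ w := by
  obtain ⟨ℓ, hℓ⟩ := exists_forall_lt_of_mem_extremePoints_convexHull hs hx
  have hℓ_eq : ∀ z, ℓ z = z ⬝ᵥ fun i => ℓ fun j => if i = j then 1 else 0 :=
    ℓ.toLinearMap.pi_apply_eq_sum_univ
  exact ⟨_, fun y hy hyx => hℓ_eq y ▸ hℓ_eq x ▸ hℓ y hy hyx⟩

theorem toR_injective {n : ℕ} : Function.Injective (toR (n := n)) := fun _ _ h =>
  Finsupp.ext fun i => Nat.cast_injective (congrFun h i)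

theorem exists_dotProduct_lt_of_toR_mem_extremePoints {n : ℕ} {s : Finset (Fin n →₀ ℕ)}
    {a : Fin n →₀ ℕ} (ha : toR a ∈ (convexHull ℝ (toR '' (s : Set (Fin n →₀ ℕ)))).extremePoints ℝ) :
    ∃ w : Fin n → ℝ, ∀ b ∈ s, b ≠ a → toR b ⬝ᵥ w < toR a ⬝ᵥ w := by
  obtain ⟨w, hw⟩ := exists_dotProduct_lt_of_mem_extremePoints_convexHull (s.finite_toSet.image _) ha
  exact ⟨w, fun b hb hba => hw _ ⟨b, hb, rfl⟩ (toR_injective.ne hba)⟩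

theorem prod_mul_exp_pow {n : ℕ} (ε w : Fin n → ℝ) (t : ℝ) (b : Fin n →₀ ℕ) :
    ∏ i, (ε i * Real.exp (t * w i)) ^ b i = (∏ i, ε i ^ b i) * Real.exp (t * (toR b ⬝ᵥ w)) := by
  simp only [dotProduct, Finset.mul_sum, Real.exp_sum, ← Finset.prod_mul_distrib, mul_pow,
    ← Real.exp_nat_mul, toR]
  congr! 3
  ring

open Filter Topology in
theorem tendsto_eval_mul_exp {n : ℕ} (f : MvPolynomial (Fin n) ℝ) {a : Fin n →₀ ℕ}
    {w : Fin n → ℝ} (hw : ∀ b ∈ f.support, b ≠ a → toR b ⬝ᵥ w < toR a ⬝ᵥ w) (ε : Fin n → ℝ) :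
    Tendsto (fun t => eval (fun i => ε i * Real.exp (t * w i)) f * Real.exp (-(t * (toR a ⬝ᵥ w))))
      atTop (𝓝 (f.coeff a * ∏ i, ε i ^ a i)) := by
  have hexp : ∀ b ∈ f.support, Tendsto (fun t => Real.exp (t * (toR b ⬝ᵥ w - toR a ⬝ᵥ w)))
      atTop (𝓝 (if b = a then 1 else 0)) := by
    intro b hb
    split_ifs with hba
    · simp only [hba, sub_self, mul_zero, Real.exp_zero, tendsto_const_nhds]
    · exact Real.tendsto_exp_atBot.comp
        (tendsto_id.atTop_mul_const_of_neg (sub_neg.2 (hw b hb hba)))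
  have hsum := tendsto_finsetSum _ fun b hb =>
    (hexp b hb).const_mul (f.coeff b * ∏ i, ε i ^ b i)
  convert hsum using 1
  · funext t
    rw [eval_eq', Finset.sum_mul]
    refine Finset.sum_congr rfl fun b _ => ?_
    rw [prod_mul_exp_pow, mul_sub, sub_eq_add_neg, Real.exp_add]
    ring
  · simp only [mul_ite, mul_one, mul_zero, Finset.sum_ite_eq']
    split_ifs with ha
    · rfl
    · rw [notMem_support_iff.1 ha, zero_mul]

theorem coeff_mul_prod_pow_nonneg {n : ℕ} {f : MvPolynomial (Fin n) ℝ}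
    (hf : ∀ x : Fin n → ℝ, 0 ≤ eval x f) {a : Fin n →₀ ℕ} {w : Fin n → ℝ}
    (hw : ∀ b ∈ f.support, b ≠ a → toR b ⬝ᵥ w < toR a ⬝ᵥ w) (ε : Fin n → ℝ) :
    0 ≤ f.coeff a * ∏ i, ε i ^ a i :=
  ge_of_tendsto' (tendsto_eval_mul_exp f hw ε) fun _ => mul_nonneg (hf _) (Real.exp_pos _).le

/-- If `f = ∑_{a ∈ A} c_a x^a` (with `A = supp f`) is nonnegative on `ℝⁿ`,
then every vertex (extreme point) `a` of the convex hull of `A` lies in `(2ℕ)ⁿ` and the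
corresponding coefficient `c_a` is positive. -/
theorem nonneg_vertex_even_and_pos_coeff {n : ℕ} (f : MvPolynomial (Fin n) ℝ)
    (hf : ∀ x : Fin n → ℝ, 0 ≤ eval x f)
    (a : Fin n →₀ ℕ) (ha : a ∈ f.support)
    (hvert : toR a ∈ Set.extremePoints ℝ
      (convexHull ℝ (toR '' (f.support : Set (Fin n →₀ ℕ))))) :
    IsEvenPoint a ∧ 0 < f.coeff a := by
  obtain ⟨w, hw⟩ := exists_dotProduct_lt_of_toR_mem_extremePoints hvert
  have hsign := coeff_mul_prod_pow_nonneg hf hw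
  have hpos : 0 < f.coeff a :=
    (by simpa using hsign 1 : 0 ≤ f.coeff a).lt_of_ne' (mem_support_iff.1 ha)
  refine ⟨fun j => ?_, hpos⟩
  by_contra hodd
  have hflip := hsign fun i => if i = j then -1 else 1
  simp only [ite_pow, one_pow, Finset.prod_ite_eq', Finset.mem_univ, if_true,
    (Nat.not_even_iff_odd.1 hodd).neg_one_pow] at hflip
  linarith

end
end SONC
end

section
/- Let f = Σ_{a∈A} c_a x^a − d x^β ∈ ℝ[x₁,…,xₙ] be a circuit polynomial, where A ⊆ (2ℕ)ⁿ is a trellis, c_a > 0 for all a ∈ A, and β ∈ ℕⁿ lies in the interior of Conv(A), with barycentric coordinates β = Σ_{a∈A} λ_a a, λ_a > 0, Σ_{a∈A} λ_a = 1. Let Θ_f := Π_{a∈A} (c_a/λ_a)^{λ_a} be its circuit number. Then f is nonnegative on ℝⁿ if and only if: either β ∉ (2ℕ)ⁿ and |d| ≤ Θ_f, or β ∈ (2ℕ)ⁿ and d ≤ Θ_f. -/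
/-!
Sufficiency is weighted AM–GM, `∏ z_a ^ λ_a ≤ ∑ λ_a z_a`, for `z_a = (c_a / λ_a) |x| ^ a`: since
`β = ∑ λ_a a`, the geometric mean is `Θ_f |x| ^ β`, and the exponents in `A` being even, the
arithmetic mean is `∑ c_a x ^ a`. For necessity, affine independence of `A` lets one choose
`log y` so that all `z_a` coincide at a positive point `y`; there AM–GM is an equality, and
`f y ≥ 0` gives `d ≤ Θ_f`. If some `β_j` is odd, negating `y_j` flips the sign of `y ^ β` only,
which gives `-d ≤ Θ_f`.
-/

open MvPolynomial Finset Classical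

namespace SONC

noncomputable section

/-- `β` lies in the interior of the simplex with vertex set `A`, with barycentric
coordinates `lam`: all `lam a > 0`, `∑ lam a = 1`, and `β = ∑ lam a • a`. -/
def IsInteriorPt {n : ℕ} (A : Finset (Fin n →₀ ℕ)) (lam : (Fin n →₀ ℕ) → ℝ)
    (β : Fin n →₀ ℕ) : Prop :=
  (∀ a ∈ A, 0 < lam a) ∧ ∑ a ∈ A, lam a = 1 ∧
    ∀ i, (β i : ℝ) = ∑ a ∈ A, lam a * (a i : ℝ)

theorem _root_.AffineIndependent.exists_affineMap_eq {ι k E : Type*} [Fintype ι] [Field k]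
    [AddCommGroup E] [Module k E] {p : ι → E} (hp : AffineIndependent k p) (v : ι → k) :
    ∃ F : E →ᵃ[k] k, ∀ i, F (p i) = v i := by
  have hlift : LinearIndependent k fun i => (p i, (1 : k)) := by
    refine Fintype.linearIndependent_iff.2 fun w hw => ?_
    have hsum : ∑ i, w i = 0 := by simpa [Prod.snd_sum] using congrArg Prod.snd hw
    have hcomb : ∑ i, w i • p i = 0 := by simpa [Prod.fst_sum] using congrArg Prod.fst hw
    exact fun i => affineIndependent_iff.1 hp univ w hsum hcomb i (mem_univ i)
  obtain ⟨g, hg⟩ := LinearMap.exists_leftInverse_of_injective _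
    (LinearMap.ker_eq_bot.2 hlift.fintypeLinearCombination_injective)
  let φ := Fintype.linearCombination k v ∘ₗ g
  refine ⟨(φ ∘ₗ LinearMap.inl k E k).toAffineMap + AffineMap.const k E (φ (0, 1)), fun i => ?_⟩
  have hgi : g (p i, 1) = Pi.single i 1 := by
    simpa using LinearMap.congr_fun hg (Pi.single i 1)
  have hφ : φ (p i, 1) = v i := by simp [φ, hgi]
  simpa [← map_add] using hφ

lemma prod_update_neg_pow {ι R : Type*} [Fintype ι] [DecidableEq ι] [CommRing R]
    (y : ι → R) (j : ι) (e : ι → ℕ) :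
    ∏ i, Function.update y j (-y j) i ^ e i = (-1) ^ e j * ∏ i, y i ^ e i := by
  rw [← mul_prod_erase univ _ (mem_univ j),
    ← mul_prod_erase univ (fun i => y i ^ e i) (mem_univ j),
    Function.update_self, neg_pow, mul_assoc]
  congr 2
  exact prod_congr rfl fun i hi => by rw [Function.update_of_ne (ne_of_mem_erase hi)]

section Circuit

variable {n : ℕ} {A : Finset (Fin n →₀ ℕ)} {c lam : (Fin n →₀ ℕ) → ℝ} {β : Fin n →₀ ℕ}

def circuitNumber (A : Finset (Fin n →₀ ℕ)) (c lam : (Fin n →₀ ℕ) → ℝ) : ℝ :=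
  ∏ a ∈ A, (c a / lam a) ^ lam a

lemma eval_sum_monomial_sub_monomial (d : ℝ) (x : Fin n → ℝ) :
    eval x ((∑ a ∈ A, monomial a (c a)) - monomial β d)
      = ∑ a ∈ A, c a * ∏ i, x i ^ a i - d * ∏ i, x i ^ β i := by
  simp [eval_monomial, Finsupp.prod_pow]

lemma prod_monomial_rpow_eq (hlam : ∀ a ∈ A, 0 ≤ lam a)
    (hβ : ∀ i, (β i : ℝ) = ∑ a ∈ A, lam a * a i) {x : Fin n → ℝ} (hx : ∀ i, 0 ≤ x i) :
    ∏ a ∈ A, (∏ i, x i ^ a i) ^ lam a = ∏ i, x i ^ β i := by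
  calc ∏ a ∈ A, (∏ i, x i ^ a i) ^ lam a
      = ∏ a ∈ A, ∏ i, x i ^ (lam a * a i) := by
        refine prod_congr rfl fun a _ => ?_
        rw [← Real.finsetProd_rpow _ _ fun i _ => pow_nonneg (hx i) _]
        refine prod_congr rfl fun i _ => ?_
        rw [← Real.rpow_natCast, ← Real.rpow_mul (hx i), mul_comm]
    _ = ∏ i, x i ^ β i := by
        rw [prod_comm]
        refine prod_congr rfl fun i _ => ?_
        rw [← Real.rpow_sum_of_nonneg (hx i) fun a ha => mul_nonneg (hlam a ha) (by positivity),
          ← hβ, Real.rpow_natCast]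

lemma circuitNumber_mul_eq_prod_rpow (hc : ∀ a ∈ A, 0 ≤ c a) (hlam : IsInteriorPt A lam β)
    {x : Fin n → ℝ} (hx : ∀ i, 0 ≤ x i) :
    circuitNumber A c lam * ∏ i, x i ^ β i = ∏ a ∈ A, (c a / lam a * ∏ i, x i ^ a i) ^ lam a := by
  have hlam₀ a (ha : a ∈ A) : 0 ≤ lam a := (hlam.1 a ha).le
  rw [circuitNumber, ← prod_monomial_rpow_eq hlam₀ hlam.2.2 hx, ← prod_mul_distrib]
  exact prod_congr rfl fun a ha => (Real.mul_rpow (div_nonneg (hc a ha) (hlam₀ a ha))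
    (prod_nonneg fun i _ => pow_nonneg (hx i) _)).symm

lemma circuitNumber_mul_le_sum (hc : ∀ a ∈ A, 0 ≤ c a) (hlam : IsInteriorPt A lam β)
    {x : Fin n → ℝ} (hx : ∀ i, 0 ≤ x i) :
    circuitNumber A c lam * ∏ i, x i ^ β i ≤ ∑ a ∈ A, c a * ∏ i, x i ^ a i := by
  rw [circuitNumber_mul_eq_prod_rpow hc hlam hx]
  convert Real.geom_mean_le_arith_mean_weighted A lam
    (fun a => c a / lam a * ∏ i, x i ^ a i) (fun a ha => (hlam.1 a ha).le) hlam.2.1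
    (fun a ha => mul_nonneg (div_nonneg (hc a ha) (hlam.1 a ha).le)
      (prod_nonneg fun i _ => pow_nonneg (hx i) _)) using 1
  exact sum_congr rfl fun a ha => by rw [← mul_assoc, mul_div_cancel₀ _ (hlam.1 a ha).ne']

lemma circuitNumber_mul_abs_le_sum (hA : ∀ a ∈ A, IsEvenPoint a) (hc : ∀ a ∈ A, 0 ≤ c a)
    (hlam : IsInteriorPt A lam β) (x : Fin n → ℝ) :
    circuitNumber A c lam * |∏ i, x i ^ β i| ≤ ∑ a ∈ A, c a * ∏ i, x i ^ a i := by
  have hsum : ∑ a ∈ A, c a * ∏ i, |x i| ^ a i = ∑ a ∈ A, c a * ∏ i, x i ^ a i :=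
    sum_congr rfl fun a ha => by simp only [(hA a ha _).pow_abs]
  simpa only [abs_prod, abs_pow, hsum] using
    circuitNumber_mul_le_sum hc hlam (x := fun i => |x i|) fun i => abs_nonneg _

lemma exists_pos_circuitNumber_mul_eq_sum
    (hAff : AffineIndependent ℝ (fun a : A => toR (a : Fin n →₀ ℕ)))
    (hc : ∀ a ∈ A, 0 < c a) (hlam : IsInteriorPt A lam β) :
    ∃ y : Fin n → ℝ, (∀ i, 0 < y i) ∧
      circuitNumber A c lam * ∏ i, y i ^ β i = ∑ a ∈ A, c a * ∏ i, y i ^ a i := by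
  -- `log y` is the linear part of an affine map interpolating `a ↦ log (lam a / c a)` on `A`, so
  -- all the AM–GM terms `c a / lam a * y ^ a` take the same value `exp (-F 0)`.
  obtain ⟨F, hF⟩ := hAff.exists_affineMap_eq fun a => Real.log (lam a / c a)
  let y : Fin n → ℝ := fun i => Real.exp (F.linear (Pi.single i 1))
  have hterm : ∀ a ∈ A, c a / lam a * ∏ i, y i ^ a i = Real.exp (-F 0) := by
    intro a ha
    have hmono : ∏ i, y i ^ a i = Real.exp (F (toR a) - F 0) := by
      rw [← vsub_eq_sub, ← F.linearMap_vsub, vsub_eq_sub, sub_zero, F.linear.pi_apply_eq_sum_univ,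
        Real.exp_sum]
      refine prod_congr rfl fun i _ => ?_
      rw [← Real.exp_nat_mul, smul_eq_mul, toR]
      congr 3
      ext j
      simp [Pi.single_apply, eq_comm]
    rw [hmono, hF ⟨a, ha⟩, sub_eq_add_neg, Real.exp_add,
      Real.exp_log (div_pos (hlam.1 a ha) (hc a ha))]
    field_simp [(hc a ha).ne', (hlam.1 a ha).ne']
  refine ⟨y, fun i => Real.exp_pos _, ?_⟩
  calc circuitNumber A c lam * ∏ i, y i ^ β i = ∏ a ∈ A, Real.exp (-F 0) ^ lam a := by
        rw [circuitNumber_mul_eq_prod_rpow (fun a ha => (hc a ha).le) hlam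
          fun i => (Real.exp_pos _).le]
        exact prod_congr rfl fun a ha => by rw [hterm a ha]
    _ = ∑ a ∈ A, lam a * Real.exp (-F 0) := by
        rw [← Real.rpow_sum_of_pos (Real.exp_pos _), ← sum_mul, hlam.2.1, Real.rpow_one, one_mul]
    _ = ∑ a ∈ A, c a * ∏ i, y i ^ a i := by
        refine sum_congr rfl fun a ha => ?_
        rw [← hterm a ha, ← mul_assoc, mul_div_cancel₀ _ (hlam.1 a ha).ne']

lemma le_circuitNumber_of_forall_le
    (hAff : AffineIndependent ℝ (fun a : A => toR (a : Fin n →₀ ℕ)))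
    (hc : ∀ a ∈ A, 0 < c a) (hlam : IsInteriorPt A lam β) {d : ℝ}
    (h : ∀ x : Fin n → ℝ, d * ∏ i, x i ^ β i ≤ ∑ a ∈ A, c a * ∏ i, x i ^ a i) :
    d ≤ circuitNumber A c lam := by
  obtain ⟨y, hy, hmin⟩ := exists_pos_circuitNumber_mul_eq_sum hAff hc hlam
  exact le_of_mul_le_mul_right (hmin ▸ h y) (prod_pos fun i _ => pow_pos (hy i) _)

lemma neg_le_circuitNumber_of_forall_le (hA : ∀ a ∈ A, IsEvenPoint a) (hβ : ¬ IsEvenPoint β)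
    (hAff : AffineIndependent ℝ (fun a : A => toR (a : Fin n →₀ ℕ)))
    (hc : ∀ a ∈ A, 0 < c a) (hlam : IsInteriorPt A lam β) {d : ℝ}
    (h : ∀ x : Fin n → ℝ, d * ∏ i, x i ^ β i ≤ ∑ a ∈ A, c a * ∏ i, x i ^ a i) :
    -d ≤ circuitNumber A c lam := by
  obtain ⟨j, hj⟩ : ∃ j, Odd (β j) := by simpa [IsEvenPoint] using hβ
  refine le_circuitNumber_of_forall_le hAff hc hlam fun x => ?_
  have hsum : ∑ a ∈ A, c a * ∏ i, Function.update x j (-x j) i ^ a i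
      = ∑ a ∈ A, c a * ∏ i, x i ^ a i :=
    sum_congr rfl fun a ha => by rw [prod_update_neg_pow, (hA a ha j).neg_one_pow, one_mul]
  have hflip := h (Function.update x j (-x j))
  rwa [hsum, prod_update_neg_pow, hj.neg_one_pow, neg_one_mul, mul_neg, ← neg_mul] at hflip

end Circuit

theorem circuit_nonneg_iff_circuit_number_general {n : ℕ}
    (A : Finset (Fin n →₀ ℕ)) (hA : ∀ a ∈ A, IsEvenPoint a)
    (hAff : AffineIndependent ℝ (fun a : A => toR (a : Fin n →₀ ℕ)))
    (c : (Fin n →₀ ℕ) → ℝ) (hc : ∀ a ∈ A, 0 < c a)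
    (d : ℝ) (β : Fin n →₀ ℕ)
    (lam : (Fin n →₀ ℕ) → ℝ) (hlam : IsInteriorPt A lam β)
    (f : MvPolynomial (Fin n) ℝ)
    (hf : f = (∑ a ∈ A, monomial a (c a)) - monomial β d) :
    (∀ x : Fin n → ℝ, 0 ≤ eval x f) ↔
      ((¬ IsEvenPoint β ∧ |d| ≤ ∏ a ∈ A, (c a / lam a) ^ (lam a)) ∨
        (IsEvenPoint β ∧ d ≤ ∏ a ∈ A, (c a / lam a) ^ (lam a))) := by
  simp only [hf, eval_sum_monomial_sub_monomial, sub_nonneg]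
  change _ ↔ (_ ∧ |d| ≤ circuitNumber A c lam) ∨ (_ ∧ d ≤ circuitNumber A c lam)
  have hc₀ a (ha : a ∈ A) : 0 ≤ c a := (hc a ha).le
  constructor
  · intro h
    have hd := le_circuitNumber_of_forall_le hAff hc hlam h
    by_cases hβ : IsEvenPoint β
    · exact .inr ⟨hβ, hd⟩
    · have hd' := neg_le_circuitNumber_of_forall_le hA hβ hAff hc hlam h
      exact .inl ⟨hβ, abs_le.2 ⟨neg_le.1 hd', hd⟩⟩
  · rintro (⟨-, hd⟩ | ⟨hβ, hd⟩) x <;>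
      refine le_trans ?_ (circuitNumber_mul_abs_le_sum hA hc₀ hlam x)
    · calc d * ∏ i, x i ^ β i ≤ |d| * |∏ i, x i ^ β i| := (le_abs_self _).trans (abs_mul _ _).le
        _ ≤ _ := by gcongr
    · have hxβ : 0 ≤ ∏ i, x i ^ β i := prod_nonneg fun i _ => (hβ i).pow_nonneg _
      rw [abs_of_nonneg hxβ]
      exact mul_le_mul_of_nonneg_right hd hxβ

/-- Iliman–de Wolff. Let `f = ∑_{a ∈ A} c_a x^a - d x^β` be a circuit
polynomial: `A ⊆ (2ℕ)ⁿ` a trellis (vertex set of a simplex), `c_a > 0`, `β` an interior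
point of `Conv(A)` with barycentric coordinates `lam`.  With circuit number
`Θ_f = ∏_{a ∈ A} (c_a / λ_a)^{λ_a}`, the polynomial `f` is nonnegative on `ℝⁿ` iff
either `β ∉ (2ℕ)ⁿ` and `|d| ≤ Θ_f`, or `β ∈ (2ℕ)ⁿ` and `d ≤ Θ_f`. -/
theorem circuit_nonneg_iff_circuit_number {n : ℕ}
    (A : Finset (Fin n →₀ ℕ)) (hA : ∀ a ∈ A, IsEvenPoint a)
    (hAff : AffineIndependent ℝ (fun a : A => toR (a : Fin n →₀ ℕ)))
    (c : (Fin n →₀ ℕ) → ℝ) (hc : ∀ a ∈ A, 0 < c a)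
    (d : ℝ) (β : Fin n →₀ ℕ) (hβA : β ∉ A)
    (lam : (Fin n →₀ ℕ) → ℝ) (hlam : IsInteriorPt A lam β)
    (f : MvPolynomial (Fin n) ℝ)
    (hf : f = (∑ a ∈ A, monomial a (c a)) - monomial β d) :
    (∀ x : Fin n → ℝ, 0 ≤ eval x f) ↔
      ((¬ IsEvenPoint β ∧ |d| ≤ ∏ a ∈ A, (c a / lam a) ^ (lam a)) ∨
        (IsEvenPoint β ∧ d ≤ ∏ a ∈ A, (c a / lam a) ^ (lam a))) :=
  circuit_nonneg_iff_circuit_number_general A hA hAff c hc d β lam hlam f hf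

end
end SONC
end

section
/- Let f = Σ_{a∈Λ(f)} c_a x^a − d x^β ∈ ℝ[x₁,…,xₙ] with c_a > 0 for all a ∈ Λ(f), where Λ(f) ⊆ (2ℕ)ⁿ, d ≠ 0 (and d > 0 if β ∈ (2ℕ)ⁿ), and β lies in the interior of the Newton polytope Conv(Λ(f)). If f is nonnegative on ℝⁿ, then f is a sum of nonnegative circuit polynomials with the same support: f = Σ_{Δ∈Δ(β)} (Σ_{a∈V(Δ)} c_{Δ,a} x^a − d_Δ x^β), where each summand is a nonnegative circuit polynomial, Δ(β) is the set of simplices Δ with vertex set V(Δ) ⊆ Λ(f) and β ∈ Δ°. -/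
/-!
Let `z` minimise `F(z) = ∑ₐ cₐ e^{⟨a - β, z⟩}`, which is coercive because `β` is interior to the
Newton polytope. At `z` the weights `wₐ = cₐ e^{⟨a - β, z⟩}` balance around `β`, i.e.
`∑ₐ wₐ (a - β) = 0`, and evaluating `f` at the points `(±e^{zᵢ})ᵢ` gives `|d| ≤ ∑ₐ wₐ`.
A nonnegative balanced weight is a sum of balanced weights supported on simplices: an affine
dependence among the support lets one write it as a convex combination of two balanced weights
of smaller support. A simplex piece `u` gives the circuit polynomial
`∑ₐ uₐ e^{⟨β - a, z⟩} xᵃ - (d / ∑ w) (∑ u) x^β`, which is nonnegative because `eˢ ≥ 1 + s`,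
and these circuit polynomials add up to `f`.
-/

open MvPolynomial Finset Classical

namespace SONC

noncomputable section

/-- A polynomial is nonnegative if it takes nonnegative values on all of `ℝⁿ`. -/
def IsNonneg {n : ℕ} (f : MvPolynomial (Fin n) ℝ) : Prop :=
  ∀ x : Fin n → ℝ, 0 ≤ eval x f

/-- `g` is a circuit polynomial with simplex vertex set `A` and inner exponent `β`. -/
def IsCircuitOn {n : ℕ} (A : Finset (Fin n →₀ ℕ)) (β : Fin n →₀ ℕ)
    (g : MvPolynomial (Fin n) ℝ) : Prop :=
  AffineIndependent ℝ (fun a : A => toR (a : Fin n →₀ ℕ)) ∧ β ∉ A ∧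
  ∃ (c : (Fin n →₀ ℕ) → ℝ) (d : ℝ) (lam : (Fin n →₀ ℕ) → ℝ),
    (∀ a ∈ A, 0 < c a) ∧ IsInteriorPt A lam β ∧
    g = (∑ a ∈ A, monomial a (c a)) - monomial β d

/-- `Λ(f)`: the exponents in the support of `f` that are even and have positive coefficient. -/
def posSupp {n : ℕ} (f : MvPolynomial (Fin n) ℝ) : Finset (Fin n →₀ ℕ) :=
  f.support.filter fun a => IsEvenPoint a ∧ 0 < f.coeff a

/-- `Γ(f) := supp(f) \ Λ(f)`. -/
def negSupp {n : ℕ} (f : MvPolynomial (Fin n) ℝ) : Finset (Fin n →₀ ℕ) :=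
  f.support \ posSupp f

/-- `f` is a sum of nonnegative circuit polynomials with the same support:
`f = ∑ g_i` where each `g_i` is a nonnegative circuit polynomial whose simplex
vertex set is contained in `Λ(f)` and whose inner exponent lies in `Γ(f)`. -/
def SONCSameSupport {n : ℕ} (f : MvPolynomial (Fin n) ℝ) : Prop :=
  ∃ (m : ℕ) (g : Fin m → MvPolynomial (Fin n) ℝ)
    (A : Fin m → Finset (Fin n →₀ ℕ)) (β : Fin m → (Fin n →₀ ℕ)),
    f = ∑ i, g i ∧
    ∀ i, IsCircuitOn (A i) (β i) (g i) ∧ IsNonneg (g i) ∧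
      A i ⊆ posSupp f ∧ β i ∈ negSupp f

open Real Filter

section SimplexWeight

variable {α E : Type*} [AddCommGroup E] [Module ℝ E] (p : α → E) (q : E)

/-- `q` is the barycenter, with weights `u`, of the simplex spanned by the `p a`,
`a ∈ u.support`. -/
def IsSimplexWeight (u : α →₀ ℝ) : Prop :=
  u ≠ 0 ∧ (∀ a, 0 ≤ u a) ∧ AffineIndependent ℝ (fun a : u.support => p a) ∧
    Finsupp.linearCombination ℝ (fun a => p a - q) u = 0

variable {p q}

theorem IsSimplexWeight.smul {u : α →₀ ℝ} (hu : IsSimplexWeight p q u) {r : ℝ} (hr : 0 < r) :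
    IsSimplexWeight p q (r • u) := by
  obtain ⟨hu0, hnn, hind, hbar⟩ := hu
  refine ⟨smul_ne_zero hr.ne' hu0, fun a => mul_nonneg hr.le (hnn a), ?_, ?_⟩
  · rwa [Finsupp.support_smul_eq hr.ne']
  · rw [map_smul, hbar, smul_zero]

theorem IsSimplexWeight.pos {u : α →₀ ℝ} (hu : IsSimplexWeight p q u) {a : α}
    (ha : a ∈ u.support) : 0 < u a :=
  (hu.2.1 a).lt_of_ne' (Finsupp.mem_support_iff.1 ha)

theorem exists_pos_neg_of_not_affineIndependent {s : Finset α}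
    (h : ¬AffineIndependent ℝ (fun a : s => p a)) (q : E) :
    ∃ τ : α →₀ ℝ, τ.support ⊆ s ∧ (∃ a, 0 < τ a) ∧ (∃ a, τ a < 0) ∧
      Finsupp.linearCombination ℝ (fun a => p a - q) τ = 0 := by
  rw [affineIndependent_iff_of_fintype] at h
  push Not at h
  obtain ⟨σ, hσ, hσp, i, hi⟩ := h
  have hτ (a : s) : Finsupp.mapDomain Subtype.val (Finsupp.equivFunOnFinite.symm σ) a = σ a := by
    rw [Finsupp.mapDomain_apply Subtype.val_injective, Finsupp.coe_equivFunOnFinite_symm]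
  refine ⟨Finsupp.mapDomain Subtype.val (Finsupp.equivFunOnFinite.symm σ), ?_, ?_, ?_, ?_⟩
  · refine Finsupp.mapDomain_support.trans fun a ha => ?_
    obtain ⟨b, -, rfl⟩ := Finset.mem_image.1 ha
    exact b.2
  · obtain ⟨j, -, hj⟩ := exists_pos_of_sum_zero_of_exists_nonzero σ hσ ⟨i, mem_univ _, hi⟩
    exact ⟨j, (hτ j).symm ▸ hj⟩
  · obtain ⟨j, -, hj⟩ := exists_pos_of_sum_zero_of_exists_nonzero (-σ)
      (by simpa only [Pi.neg_apply, Finset.sum_neg_distrib, neg_eq_zero] using hσ)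
      ⟨i, mem_univ _, neg_ne_zero.2 hi⟩
    exact ⟨j, (hτ j).symm ▸ neg_pos.1 hj⟩
  · rw [Finset.weightedVSub_eq_weightedVSubOfPoint_of_sum_eq_zero (h := hσ) (b := q),
      Finset.weightedVSubOfPoint_apply] at hσp
    rw [Finsupp.linearCombination_mapDomain, Finsupp.linearCombination_apply,
      Finsupp.sum_fintype _ _ (by simp)]
    simpa using hσp

theorem exists_sub_smul_nonneg_support_ssubset {w τ : α →₀ ℝ} (hw : ∀ a, 0 ≤ w a)
    (hτ : τ.support ⊆ w.support) (hpos : ∃ a, 0 < τ a) :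
    ∃ t : ℝ, 0 < t ∧ (∀ a, 0 ≤ (w - t • τ) a) ∧ (w - t • τ).support ⊂ w.support := by
  obtain ⟨a₀, ha₀, hmin⟩ := (τ.support.filter (0 < τ ·)).exists_min_image (fun a => w a / τ a)
    (by obtain ⟨a, ha⟩ := hpos; exact ⟨a, by simp [ha.ne', ha]⟩)
  rw [Finset.mem_filter] at ha₀
  have hw₀ : 0 < w a₀ := (hw a₀).lt_of_ne' (Finsupp.mem_support_iff.1 (hτ ha₀.1))
  refine ⟨w a₀ / τ a₀, div_pos hw₀ ha₀.2, fun a => ?_, ?_⟩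
  · rw [Finsupp.sub_apply, Finsupp.smul_apply, smul_eq_mul, sub_nonneg]
    rcases le_or_gt (τ a) 0 with h | h
    · exact (mul_nonpos_of_nonneg_of_nonpos (div_pos hw₀ ha₀.2).le h).trans (hw a)
    · exact (le_div_iff₀ h).1 (hmin a (by simp [h.ne', h]))
  · refine (Finset.ssubset_iff_of_subset ?_).2 ⟨a₀, hτ ha₀.1, ?_⟩
    · exact Finsupp.support_sub.trans (Finset.union_subset le_rfl (Finsupp.support_smul.trans hτ))
    · simp [ha₀.2.ne']

theorem exists_list_isSimplexWeight_sum_eq {w : α →₀ ℝ} (hw : ∀ a, 0 ≤ w a)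
    (hq : Finsupp.linearCombination ℝ (fun a => p a - q) w = 0) :
    ∃ l : List (α →₀ ℝ), (∀ u ∈ l, IsSimplexWeight p q u ∧ u.support ⊆ w.support) ∧
      l.sum = w := by
  induction hN : w.support.card using Nat.strong_induction_on generalizing w with
  | _ N ih =>
  by_cases hw0 : w = 0
  · exact ⟨[], by simp, by simp [hw0]⟩
  by_cases hind : AffineIndependent ℝ (fun a : w.support => p a)
  · exact ⟨[w], by simpa using ⟨hw0, hw, hind, hq⟩, List.sum_singleton⟩
  obtain ⟨τ, hτw, hpos, hneg, hτq⟩ := exists_pos_neg_of_not_affineIndependent hind q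
  have piece (σ : α →₀ ℝ) (hσw : σ.support ⊆ w.support) (hσpos : ∃ a, 0 < σ a)
      (hσq : Finsupp.linearCombination ℝ (fun a => p a - q) σ = 0) :
      ∃ t : ℝ, 0 < t ∧ ∃ l : List (α →₀ ℝ),
        (∀ u ∈ l, IsSimplexWeight p q u ∧ u.support ⊆ w.support) ∧ l.sum = w - t • σ := by
    obtain ⟨t, ht, hnn, hss⟩ := exists_sub_smul_nonneg_support_ssubset hw hσw hσpos
    obtain ⟨l, hl, hsum⟩ := ih _ (hN ▸ Finset.card_lt_card hss) hnn
      (by rw [map_sub, map_smul, hq, hσq, smul_zero, sub_zero]) rfl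
    exact ⟨t, ht, l, fun u hu => ⟨(hl u hu).1, (hl u hu).2.trans hss.subset⟩, hsum⟩
  obtain ⟨t₁, ht₁, l₁, hl₁, hsum₁⟩ := piece τ hτw hpos hτq
  obtain ⟨t₂, ht₂, l₂, hl₂, hsum₂⟩ := piece (-τ) (by rwa [Finsupp.support_neg])
    (by simpa using hneg) (by rw [map_neg, hτq, neg_zero])
  have hscale (l : List (α →₀ ℝ)) (hl : ∀ u ∈ l, IsSimplexWeight p q u ∧ u.support ⊆ w.support)
      {r : ℝ} (hr : 0 < r) :
      ∀ u ∈ l.map (r • ·), IsSimplexWeight p q u ∧ u.support ⊆ w.support := by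
    simp only [List.mem_map]
    rintro _ ⟨u, hu, rfl⟩
    exact ⟨(hl u hu).1.smul hr, Finsupp.support_smul.trans (hl u hu).2⟩
  -- `w` is the convex combination of `w - t₁ • τ` and `w + t₂ • τ` that cancels `τ`.
  refine ⟨l₁.map ((t₂ / (t₁ + t₂)) • ·) ++ l₂.map ((t₁ / (t₁ + t₂)) • ·), ?_, ?_⟩
  · simp only [List.mem_append]
    rintro u (hu | hu)
    exacts [hscale l₁ hl₁ (by positivity) u hu, hscale l₂ hl₂ (by positivity) u hu]
  · rw [List.sum_append, ← List.smul_sum, ← List.smul_sum, hsum₁, hsum₂]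
    ext a
    simp only [Finsupp.add_apply, Finsupp.smul_apply, Finsupp.sub_apply, Finsupp.neg_apply,
      smul_eq_mul]
    field_simp
    ring

end SimplexWeight

section ExpSum

variable {α ι : Type*} [Fintype ι]

theorem sum_le_sum_mul_exp_dotProduct {s : Finset α} {u : α → ℝ} {v : α → ι → ℝ}
    (hu : ∀ a ∈ s, 0 ≤ u a) (h : ∑ a ∈ s, u a • v a = 0) (y : ι → ℝ) :
    ∑ a ∈ s, u a ≤ ∑ a ∈ s, u a * exp (v a ⬝ᵥ y) := by
  have h0 : ∑ a ∈ s, u a * (v a ⬝ᵥ y) = 0 := by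
    simp_rw [← smul_eq_mul, ← smul_dotProduct]
    rw [← sum_dotProduct, h, zero_dotProduct]
  calc ∑ a ∈ s, u a = ∑ a ∈ s, u a * (v a ⬝ᵥ y + 1) := by
        simp [mul_add, sum_add_distrib, h0]
    _ ≤ ∑ a ∈ s, u a * exp (v a ⬝ᵥ y) :=
        sum_le_sum fun a ha => mul_le_mul_of_nonneg_left (add_one_le_exp _) (hu a ha)

theorem sq_norm_le_dotProduct_self (z : ι → ℝ) : ‖z‖ ^ 2 ≤ z ⬝ᵥ z := by
  have hzz : 0 ≤ z ⬝ᵥ z := sum_nonneg fun i _ => mul_self_nonneg (z i)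
  rw [← Real.le_sqrt (norm_nonneg _) hzz, pi_norm_le_iff_of_nonneg (Real.sqrt_nonneg _)]
  intro i
  rw [Real.le_sqrt (norm_nonneg _) hzz, Real.norm_eq_abs, sq_abs, sq]
  exact single_le_sum (f := fun j => z j * z j) (fun j _ => mul_self_nonneg (z j)) (mem_univ i)

theorem exists_pos_mul_norm_le_dotProduct {s : Finset α} {p : α → ι → ℝ} {q : ι → ℝ}
    (hq : q ∈ interior (convexHull ℝ (p '' s))) :
    ∃ ε > 0, ∀ z : ι → ℝ, ∃ a ∈ s, ε * ‖z‖ ≤ (p a - q) ⬝ᵥ z := by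
  obtain ⟨ε, hε, hball⟩ := Metric.mem_nhds_iff.1 (mem_interior_iff_mem_nhds.1 hq)
  refine ⟨ε / 2, by positivity, fun z => ?_⟩
  set r := ε / 2 / ‖z‖
  have hr : ‖r • z‖ < ε := by
    rcases eq_or_ne z 0 with rfl | hz
    · simpa using hε
    · rw [norm_smul, Real.norm_of_nonneg (by positivity),
        div_mul_cancel₀ _ (norm_ne_zero_iff.2 hz)]
      linarith
  have hy : q + r • z ∈ convexHull ℝ (p '' s) := hball (by simpa [dist_eq_norm] using hr)
  obtain ⟨_, ⟨a, ha, rfl⟩, hle⟩ := (LinearMap.convexOn (dotProductEquiv ℝ ι z)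
    (convex_convexHull ℝ _)).exists_ge_of_mem_convexHull (subset_convexHull ℝ _) hy
  simp only [dotProductEquiv_apply_apply, dotProduct_add, dotProduct_smul, smul_eq_mul] at hle
  refine ⟨a, ha, ?_⟩
  have hnorm : ε / 2 * ‖z‖ = r * ‖z‖ ^ 2 := by
    rcases eq_or_ne ‖z‖ 0 with h | h
    · simp [h]
    · simp only [r]; field_simp
  rw [hnorm, sub_dotProduct, dotProduct_comm (p a), dotProduct_comm q]
  nlinarith [sq_norm_le_dotProduct_self z, show 0 ≤ r by positivity]

theorem sum_mul_exp_smul_eq_zero_of_forall_le {s : Finset α} (c : α → ℝ) (v : α → ι → ℝ)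
    {z₀ : ι → ℝ} (hmin : ∀ z, ∑ a ∈ s, c a * exp (v a ⬝ᵥ z₀) ≤ ∑ a ∈ s, c a * exp (v a ⬝ᵥ z)) :
    ∑ a ∈ s, (c a * exp (v a ⬝ᵥ z₀)) • v a = 0 := by
  refine dotProduct_eq_zero _ fun h => ?_
  set φ : ℝ → ℝ := fun t => ∑ a ∈ s, c a * exp (v a ⬝ᵥ z₀ + t * (v a ⬝ᵥ h))
  have hφ : HasDerivAt φ (∑ a ∈ s, c a * exp (v a ⬝ᵥ z₀) * (v a ⬝ᵥ h)) 0 := by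
    refine HasDerivAt.fun_sum fun a _ => ?_
    simpa [mul_assoc] using
      (((hasDerivAt_id (0 : ℝ)).mul_const (v a ⬝ᵥ h)).const_add (v a ⬝ᵥ z₀)).exp.const_mul (c a)
  have hloc : IsLocalMin φ 0 := Eventually.of_forall fun t => by
    simpa [φ, dotProduct_add, dotProduct_smul] using hmin (z₀ + t • h)
  rw [sum_dotProduct, ← hloc.hasDerivAt_eq_zero hφ]
  simp [smul_dotProduct, mul_assoc]

theorem exists_sum_mul_exp_smul_eq_zero {s : Finset α} {c : α → ℝ} (hc : ∀ a ∈ s, 0 < c a)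
    {p : α → ι → ℝ} {q : ι → ℝ} (hq : q ∈ interior (convexHull ℝ (p '' s))) :
    ∃ z, ∑ a ∈ s, (c a * exp ((p a - q) ⬝ᵥ z)) • (p a - q) = 0 := by
  obtain ⟨ε, hε, hgrow⟩ := exists_pos_mul_norm_le_dotProduct hq
  obtain ⟨a₀, ha₀, hmin⟩ := s.exists_min_image c (let ⟨a, ha, _⟩ := hgrow 0; ⟨a, ha⟩)
  have hlower (z : ι → ℝ) : c a₀ * exp (ε * ‖z‖) ≤ ∑ a ∈ s, c a * exp ((p a - q) ⬝ᵥ z) := by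
    obtain ⟨a, ha, hle⟩ := hgrow z
    calc c a₀ * exp (ε * ‖z‖) ≤ c a * exp ((p a - q) ⬝ᵥ z) :=
          mul_le_mul (hmin a ha) (exp_le_exp.2 hle) (exp_pos _).le (hc a ha).le
      _ ≤ ∑ a ∈ s, c a * exp ((p a - q) ⬝ᵥ z) :=
          single_le_sum (f := fun a => c a * exp ((p a - q) ⬝ᵥ z))
            (fun b hb => mul_nonneg (hc b hb).le (exp_pos _).le) ha
  have htend : Tendsto (fun z => ∑ a ∈ s, c a * exp ((p a - q) ⬝ᵥ z)) (cocompact _) atTop :=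
    tendsto_atTop_mono hlower <| (tendsto_exp_atTop.comp
      (tendsto_norm_cocompact_atTop.const_mul_atTop hε)).const_mul_atTop (hc a₀ ha₀)
  obtain ⟨z₀, hz₀⟩ := (continuous_finsetSum s fun a _ => by fun_prop).exists_forall_le htend
  exact ⟨z₀, sum_mul_exp_smul_eq_zero_of_forall_le c _ hz₀⟩

end ExpSum

section Polynomial

variable {n : ℕ}

theorem isNonneg_of_forall_ne_zero {f : MvPolynomial (Fin n) ℝ}
    (h : ∀ x : Fin n → ℝ, (∀ i, x i ≠ 0) → 0 ≤ eval x f) : IsNonneg f := by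
  have hdense : Dense (Set.pi Set.univ fun _ : Fin n => ({0}ᶜ : Set ℝ)) :=
    dense_pi _ fun _ _ => dense_compl_singleton 0
  have hclosed : IsClosed {x : Fin n → ℝ | 0 ≤ eval x f} :=
    isClosed_le continuous_const (MvPolynomial.continuous_eval f)
  intro x
  exact hclosed.closure_subset_iff.2 (fun y hy => h y (by simpa using hy))
    (hdense.closure_eq ▸ Set.mem_univ x)

theorem exists_abs_eq_one_mul_exp {ι : Type*} {x : ι → ℝ} (hx : ∀ i, x i ≠ 0) :
    ∃ s y : ι → ℝ, (∀ i, |s i| = 1) ∧ x = fun i => s i * exp (y i) :=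
  ⟨fun i => x i / |x i|, fun i => Real.log |x i|, fun i => by simp [abs_div, hx i],
    funext fun i => by
      rw [exp_log (abs_pos.2 (hx i)), div_mul_cancel₀ _ (abs_ne_zero.2 (hx i))]⟩

theorem prod_pow_eq_one_of_isEvenPoint {s : Fin n → ℝ} (hs : ∀ i, |s i| = 1)
    {a : Fin n →₀ ℕ} (ha : IsEvenPoint a) : ∏ i, s i ^ a i = 1 :=
  prod_eq_one fun i _ => by rw [← (ha i).pow_abs, hs i, one_pow]

theorem exists_abs_eq_one_mul_prod_pow_eq_abs {β : Fin n →₀ ℕ} {d : ℝ}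
    (hd : IsEvenPoint β → 0 ≤ d) :
    ∃ s : Fin n → ℝ, (∀ i, |s i| = 1) ∧ d * ∏ i, s i ^ β i = |d| := by
  rcases le_or_gt 0 d with h | h
  · exact ⟨1, by simp, by simp [abs_of_nonneg h]⟩
  obtain ⟨i₀, hi₀⟩ : ∃ i, ¬Even (β i) := not_forall.1 fun he => h.not_ge (hd he)
  refine ⟨fun i => if i = i₀ then -1 else 1, fun i => by dsimp only; split_ifs <;> simp, ?_⟩
  rw [Fintype.prod_eq_single i₀ fun i hi => by simp [hi]]
  dsimp only
  rw [if_pos rfl,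
    Odd.neg_one_pow (Nat.not_even_iff_odd.1 hi₀), abs_of_neg h, mul_neg_one]

theorem eval_sum_monomial_sub_monomial_s2 {B : Finset (Fin n →₀ ℕ)}
    (hB : ∀ a ∈ B, IsEvenPoint a) (k : (Fin n →₀ ℕ) → ℝ) (β : Fin n →₀ ℕ) (D : ℝ)
    {s : Fin n → ℝ} (hs : ∀ i, |s i| = 1) (y : Fin n → ℝ) :
    eval (fun i => s i * exp (y i)) (∑ a ∈ B, monomial a (k a) - monomial β D) =
      exp (toR β ⬝ᵥ y) * (∑ a ∈ B, k a * exp ((toR a - toR β) ⬝ᵥ y) - D * ∏ i, s i ^ β i) := by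
  have hmon (a : Fin n →₀ ℕ) :
      ∏ i, (s i * exp (y i)) ^ a i = (∏ i, s i ^ a i) * exp (toR a ⬝ᵥ y) := by
    simp only [mul_pow, prod_mul_distrib, ← exp_nat_mul, ← exp_sum, dotProduct, toR]
  simp only [map_sub, map_sum, eval_monomial, Finsupp.prod_pow, hmon, mul_sub, mul_sum,
    sub_dotProduct, exp_sub]
  congr 1
  · refine sum_congr rfl fun a ha => ?_
    rw [prod_pow_eq_one_of_isEvenPoint hs (hB a ha)]
    field_simp
  · ring

theorem isNonneg_of_forall_abs_le {B : Finset (Fin n →₀ ℕ)} (hB : ∀ a ∈ B, IsEvenPoint a)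
    {k : (Fin n →₀ ℕ) → ℝ} {β : Fin n →₀ ℕ} {D : ℝ}
    (h : ∀ y, |D| ≤ ∑ a ∈ B, k a * exp ((toR a - toR β) ⬝ᵥ y)) :
    IsNonneg (∑ a ∈ B, monomial a (k a) - monomial β D) := by
  refine isNonneg_of_forall_ne_zero fun x hx => ?_
  obtain ⟨s, y, hs, rfl⟩ := exists_abs_eq_one_mul_exp hx
  rw [eval_sum_monomial_sub_monomial_s2 hB k β D hs y]
  refine mul_nonneg (exp_pos _).le (sub_nonneg.2 ((le_abs_self _).trans ?_))
  rw [abs_mul, abs_prod, prod_eq_one fun i _ => by rw [abs_pow, hs i, one_pow], mul_one]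
  exact h y

theorem abs_le_of_isNonneg {A : Finset (Fin n →₀ ℕ)} (hA : ∀ a ∈ A, IsEvenPoint a)
    {c : (Fin n →₀ ℕ) → ℝ} {β : Fin n →₀ ℕ} {d : ℝ} (hd : IsEvenPoint β → 0 ≤ d)
    (hnn : IsNonneg (∑ a ∈ A, monomial a (c a) - monomial β d)) (y : Fin n → ℝ) :
    |d| ≤ ∑ a ∈ A, c a * exp ((toR a - toR β) ⬝ᵥ y) := by
  obtain ⟨s, hs, hsd⟩ := exists_abs_eq_one_mul_prod_pow_eq_abs hd
  have h := hnn fun i => s i * exp (y i)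
  rw [eval_sum_monomial_sub_monomial_s2 hA c β d hs y, hsd] at h
  exact sub_nonneg.1 (nonneg_of_mul_nonneg_right h (exp_pos _))

end Polynomial

section Circuit

variable {n : ℕ}

/-- The circuit polynomial `∑ₐ uₐ e^{⟨β - a, z⟩} xᵃ - κ (∑ₐ uₐ) x^β` of the weight `u`. -/
def circuitOfWeight (β : Fin n →₀ ℕ) (z : Fin n → ℝ) (κ : ℝ) :
    ((Fin n →₀ ℕ) →₀ ℝ) →ₗ[ℝ] MvPolynomial (Fin n) ℝ :=
  Finsupp.linearCombination ℝ fun a => monomial a (exp ((toR β - toR a) ⬝ᵥ z)) - monomial β κ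

theorem circuitOfWeight_apply (β : Fin n →₀ ℕ) (z : Fin n → ℝ) (κ : ℝ)
    (u : (Fin n →₀ ℕ) →₀ ℝ) :
    circuitOfWeight β z κ u = ∑ a ∈ u.support, monomial a (u a * exp ((toR β - toR a) ⬝ᵥ z)) -
      monomial β (κ * ∑ a ∈ u.support, u a) := by
  simp only [circuitOfWeight, Finsupp.linearCombination_apply, Finsupp.sum, smul_sub,
    sum_sub_distrib, smul_monomial, smul_eq_mul, ← sum_mul, ← map_sum (monomial β), mul_comm κ]

theorem isCircuitOn_circuitOfWeight {β : Fin n →₀ ℕ} {u : (Fin n →₀ ℕ) →₀ ℝ}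
    (hu : IsSimplexWeight toR (toR β) u) (hβ : β ∉ u.support) (z : Fin n → ℝ) (κ : ℝ) :
    IsCircuitOn u.support β (circuitOfWeight β z κ u) := by
  set U := ∑ a ∈ u.support, u a
  have hU : 0 < U := sum_pos (fun a ha => hu.pos ha) (Finsupp.support_nonempty_iff.2 hu.1)
  have hbar (i : Fin n) : ∑ a ∈ u.support, u a * (a i : ℝ) = U * β i := by
    have := congrFun hu.2.2.2 i
    simp only [Finsupp.linearCombination_apply, Finsupp.sum, Finset.sum_apply, Pi.smul_apply,
      Pi.sub_apply, toR, smul_eq_mul, Pi.zero_apply, mul_sub, sum_sub_distrib] at this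
    rw [sub_eq_zero.1 this, sum_mul]
  refine ⟨hu.2.2.1, hβ, _, _, fun a => u a / U, fun a ha => mul_pos (hu.pos ha) (exp_pos _),
    ⟨fun a ha => div_pos (hu.pos ha) hU, by rw [← sum_div, div_self hU.ne'], fun i => ?_⟩,
    circuitOfWeight_apply β z κ u⟩
  simp only [div_mul_eq_mul_div, ← sum_div, hbar, mul_div_cancel_left₀ _ hU.ne']

theorem isNonneg_circuitOfWeight {β : Fin n →₀ ℕ} {u : (Fin n →₀ ℕ) →₀ ℝ}
    (hu : ∀ a, 0 ≤ u a) (hbar : Finsupp.linearCombination ℝ (fun a => toR a - toR β) u = 0)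
    (heven : ∀ a ∈ u.support, IsEvenPoint a) (z : Fin n → ℝ) {κ : ℝ} (hκ : |κ| ≤ 1) :
    IsNonneg (circuitOfWeight β z κ u) := by
  rw [circuitOfWeight_apply]
  refine isNonneg_of_forall_abs_le heven fun y => ?_
  rw [Finsupp.linearCombination_apply, Finsupp.sum] at hbar
  calc |κ * ∑ a ∈ u.support, u a| ≤ ∑ a ∈ u.support, u a := by
        rw [abs_mul, abs_of_nonneg (sum_nonneg fun a _ => hu a)]
        exact mul_le_of_le_one_left (sum_nonneg fun a _ => hu a) hκ
    _ ≤ ∑ a ∈ u.support, u a * exp ((toR a - toR β) ⬝ᵥ (y - z)) :=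
        sum_le_sum_mul_exp_dotProduct (fun a _ => hu a) hbar _
    _ = ∑ a ∈ u.support, u a * exp ((toR β - toR a) ⬝ᵥ z) * exp ((toR a - toR β) ⬝ᵥ y) := by
        refine sum_congr rfl fun a _ => ?_
        rw [mul_assoc, ← exp_add, dotProduct_sub, ← neg_sub (toR a), neg_dotProduct]
        ring_nf

end Circuit

section SameSupport

variable {n : ℕ} {A : Finset (Fin n →₀ ℕ)} {c : (Fin n →₀ ℕ) → ℝ} {β : Fin n →₀ ℕ} {d : ℝ}

theorem coeff_sum_monomial_sub_monomial (b : Fin n →₀ ℕ) :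
    coeff b (∑ a ∈ A, monomial a (c a) - monomial β d) =
      (if b ∈ A then c b else 0) - if β = b then d else 0 := by
  simp [coeff_sum, coeff_monomial]

theorem subset_posSupp (hA : ∀ a ∈ A, IsEvenPoint a) (hc : ∀ a ∈ A, 0 < c a) (hβA : β ∉ A) :
    A ⊆ posSupp (∑ a ∈ A, monomial a (c a) - monomial β d) := by
  intro a ha
  have hcoeff : coeff a (∑ a ∈ A, monomial a (c a) - monomial β d) = c a := by
    rw [coeff_sum_monomial_sub_monomial, if_pos ha, if_neg (ne_of_mem_of_not_mem ha hβA).symm,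
      sub_zero]
  simp only [posSupp, mem_filter, MvPolynomial.mem_support_iff, hcoeff]
  exact ⟨(hc a ha).ne', hA a ha, hc a ha⟩

theorem mem_negSupp (hd : d ≠ 0) (hdpos : IsEvenPoint β → 0 < d) (hβA : β ∉ A) :
    β ∈ negSupp (∑ a ∈ A, monomial a (c a) - monomial β d) := by
  have hcoeff : coeff β (∑ a ∈ A, monomial a (c a) - monomial β d) = -d := by
    rw [coeff_sum_monomial_sub_monomial, if_neg hβA, if_pos rfl, zero_sub]
  refine Finset.mem_sdiff.2 ⟨MvPolynomial.mem_support_iff.2 (hcoeff ▸ neg_ne_zero.2 hd), ?_⟩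
  rw [posSupp, mem_filter, hcoeff]
  exact fun ⟨_, he, hneg⟩ => (neg_pos.1 hneg).not_gt (hdpos he)

def expWeight (A : Finset (Fin n →₀ ℕ)) (c : (Fin n →₀ ℕ) → ℝ) (β : Fin n →₀ ℕ)
    (z : Fin n → ℝ) : (Fin n →₀ ℕ) →₀ ℝ :=
  ∑ a ∈ A, Finsupp.single a (c a * exp ((toR a - toR β) ⬝ᵥ z))

theorem expWeight_nonneg (hc : ∀ a ∈ A, 0 ≤ c a) (z : Fin n → ℝ) (b : Fin n →₀ ℕ) :
    0 ≤ expWeight A c β z b := by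
  rw [expWeight, Finsupp.finsetSum_apply]
  refine sum_nonneg fun a ha => ?_
  rw [Finsupp.single_apply]
  split_ifs
  exacts [mul_nonneg (hc a ha) (exp_pos _).le, le_rfl]

theorem support_expWeight_subset (z : Fin n → ℝ) : (expWeight A c β z).support ⊆ A :=
  Finsupp.support_finsetSum.trans <| biUnion_subset.2 fun _ ha =>
    Finsupp.support_single_subset.trans (singleton_subset_iff.2 ha)

theorem linearCombination_expWeight {M : Type*} [AddCommGroup M] [Module ℝ M]
    (g : (Fin n →₀ ℕ) → M) (z : Fin n → ℝ) :
    Finsupp.linearCombination ℝ g (expWeight A c β z) =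
      ∑ a ∈ A, (c a * exp ((toR a - toR β) ⬝ᵥ z)) • g a := by
  simp only [expWeight, map_sum, Finsupp.linearCombination_single]

theorem circuitOfWeight_expWeight (z : Fin n → ℝ) (κ : ℝ) :
    circuitOfWeight β z κ (expWeight A c β z) = ∑ a ∈ A, monomial a (c a) -
      monomial β (κ * ∑ a ∈ A, c a * exp ((toR a - toR β) ⬝ᵥ z)) := by
  rw [circuitOfWeight, linearCombination_expWeight]
  simp only [smul_sub, sum_sub_distrib, smul_monomial, smul_eq_mul, ← map_sum (monomial β),
    ← sum_mul, mul_comm κ]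
  congr 1
  refine sum_congr rfl fun a _ => congrArg _ ?_
  rw [mul_assoc, ← exp_add, ← add_dotProduct, ← neg_sub (toR a), add_neg_cancel,
    zero_dotProduct, exp_zero, mul_one]

end SameSupport

/-- Wang. Let `f = ∑_{a ∈ Λ(f)} c_a x^a - d x^β` with `Λ(f) = A ⊆ (2ℕ)ⁿ`,
all `c_a > 0`, `d ≠ 0` (and `d > 0` if `β` is even), and `β` an interior point of the Newton
polytope `Conv(Λ(f))`.  If `f` is nonnegative on `ℝⁿ`, then `f` is a sum of nonnegative
circuit polynomials with the same support. -/
theorem nonneg_one_negative_term_SONCSameSupport {n : ℕ}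
    (A : Finset (Fin n →₀ ℕ)) (hA : ∀ a ∈ A, IsEvenPoint a)
    (c : (Fin n →₀ ℕ) → ℝ) (hc : ∀ a ∈ A, 0 < c a)
    (d : ℝ) (hd : d ≠ 0) (β : Fin n →₀ ℕ) (hβA : β ∉ A)
    (hdpos : IsEvenPoint β → 0 < d)
    (hβ : toR β ∈ interior (convexHull ℝ (toR '' (A : Set (Fin n →₀ ℕ)))))
    (f : MvPolynomial (Fin n) ℝ)
    (hf : f = (∑ a ∈ A, monomial a (c a)) - monomial β d)
    (hnn : IsNonneg f) :
    SONCSameSupport f := by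
  subst hf
  obtain ⟨z, hz⟩ := exists_sum_mul_exp_smul_eq_zero hc hβ
  set W := ∑ a ∈ A, c a * exp ((toR a - toR β) ⬝ᵥ z)
  have hdW : |d| ≤ W := abs_le_of_isNonneg hA (fun h => (hdpos h).le) hnn z
  have hW : 0 < W := (abs_pos.2 hd).trans_le hdW
  obtain ⟨l, hl, hlw⟩ := exists_list_isSimplexWeight_sum_eq (p := toR) (q := toR β)
    (expWeight_nonneg (fun a ha => (hc a ha).le) z) (by rwa [linearCombination_expWeight])
  refine ⟨l.length, fun i => circuitOfWeight β z (d / W) l[i.1], fun i => l[i.1].support,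
    fun _ => β, ?_, fun i => ?_⟩
  · rw [← map_sum, Fin.sum_univ_getElem, hlw, circuitOfWeight_expWeight, div_mul_cancel₀ _ hW.ne']
  obtain ⟨hu, hsub⟩ := hl _ (List.getElem_mem i.2)
  have hA' := hsub.trans (support_expWeight_subset z)
  refine ⟨isCircuitOn_circuitOfWeight hu (fun h => hβA (hA' h)) z _,
    isNonneg_circuitOfWeight hu.2.1 hu.2.2.2 (fun a ha => hA a (hA' ha)) z ?_,
    hA'.trans (subset_posSupp hA hc hβA), mem_negSupp hd hdpos hβA⟩
  rw [abs_div, abs_of_pos hW]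
  exact div_le_one_of_le₀ hdW hW.le

end
end SONC
end
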